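/- arXiv:2009.09570 — 3 statements merged into one kernel-verified Lean document; each statement's English description precedes it below -/
import Mathlib

section
/- Sharp lower bound on min-entropy via Shannon entropy: if θ* ∈ [1/B, 1] satisfies h(θ*) + (1-θ*)·log₂(B-1) = H(P), then H^(∞)(P) ≥ -log₂ θ*. -/
open Real Finset

/-- Jensen bound: sum of negMulLog over a finite set of card n. -/
lemma aux_sum_negMulLog_le {ι : Type*} (t : Finset ι) (hn : t.Nonempty)
    (q : ι → ℝ) (hq : ∀ i ∈ t, 0 ≤ q i) :
    ∑ i ∈ t, Real.negMulLog (q i) ≤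
      Real.negMulLog (∑ i ∈ t, q i) + (∑ i ∈ t, q i) * Real.log t.card := by
  set n : ℝ := (t.card : ℝ) with hndef
  have hnpos : (0:ℝ) < n := by
    simp only [hndef, Nat.cast_pos]
    exact Finset.card_pos.mpr hn
  have hw : ∑ _i ∈ t, (n⁻¹ : ℝ) = 1 := by
    rw [Finset.sum_const, nsmul_eq_mul]
    exact mul_inv_cancel₀ (ne_of_gt hnpos)
  have hjen := Real.concaveOn_negMulLog.le_map_sum (t := t) (w := fun _ => n⁻¹)
    (p := q) (fun i _ => by positivity) hw (fun i hi => Set.mem_Ici.mpr (hq i hi))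
  simp only [smul_eq_mul, ← Finset.mul_sum] at hjen
  -- hjen : n⁻¹ * ∑ negMulLog (q i) ≤ negMulLog (n⁻¹ * ∑ q i)
  have key : n * Real.negMulLog (n⁻¹ * ∑ i ∈ t, q i)
      = Real.negMulLog (∑ i ∈ t, q i) + (∑ i ∈ t, q i) * Real.log n := by
    rw [mul_comm (n⁻¹) _, Real.negMulLog_mul]
    simp only [Real.negMulLog, Real.log_inv]
    field_simp
  calc ∑ i ∈ t, Real.negMulLog (q i)
      = n * (n⁻¹ * ∑ i ∈ t, Real.negMulLog (q i)) := by field_simp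
    _ ≤ n * Real.negMulLog (n⁻¹ * ∑ i ∈ t, q i) := by
        exact mul_le_mul_of_nonneg_left hjen (le_of_lt hnpos)
    _ = _ := by rw [key]

/-- Sharp lower bound on min-entropy via Shannon entropy. -/
theorem min_entropy_lower_bound_shannon {B : ℕ} (hB : 2 ≤ B) (p : Fin B → ℝ)
    (hp : ∀ b, 0 ≤ p b) (hsum : ∑ b, p b = 1)
    (θs : ℝ) (hθ : θs ∈ Set.Icc (1 / (B : ℝ)) 1)
    (hkey : (-(θs * Real.logb 2 θs) - (1 - θs) * Real.logb 2 (1 - θs)) +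
        (1 - θs) * Real.logb 2 ((B : ℝ) - 1) = ∑ b, -(p b * Real.logb 2 (p b))) :
    -Real.logb 2 (Finset.univ.sup' ⟨⟨0, by omega⟩, Finset.mem_univ _⟩ p) ≥
      -Real.logb 2 θs := by
  have hBpos : (0:ℝ) < B := by positivity
  have hB1 : (1:ℝ) ≤ (B:ℝ) - 1 := by
    have : (2:ℝ) ≤ B := by exact_mod_cast hB
    linarith
  set θ : ℝ := Finset.univ.sup' ⟨⟨0, by omega⟩, Finset.mem_univ _⟩ p with hθdef
  have hne : (Finset.univ : Finset (Fin B)).Nonempty := ⟨⟨0, by omega⟩, Finset.mem_univ _⟩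
  -- θ attained
  obtain ⟨b₀, _, hb₀⟩ := Finset.exists_mem_eq_sup' hne p
  have hpb₀ : p b₀ = θ := hb₀.symm
  have hle : ∀ b, p b ≤ θ := fun b => Finset.le_sup' p (Finset.mem_univ b)
  -- bounds on θ
  have hθ1 : θ ≤ 1 := by
    apply Finset.sup'_le
    intro b _
    calc p b ≤ ∑ b, p b := Finset.single_le_sum (fun i _ => hp i) (Finset.mem_univ b)
      _ = 1 := hsum
  have hθB : 1 / (B:ℝ) ≤ θ := by
    rw [div_le_iff₀ hBpos]
    have : (1:ℝ) ≤ B * θ := by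
      calc (1:ℝ) = ∑ b, p b := hsum.symm
        _ ≤ ∑ _b : Fin B, θ := Finset.sum_le_sum (fun i _ => hle i)
        _ = B * θ := by simp [mul_comm]
    linarith [this]
  have hθpos : 0 < θ := lt_of_lt_of_le (by positivity) hθB
  -- Convert hkey to natural logs
  have hlog2 : (0:ℝ) < Real.log 2 := Real.log_pos one_lt_two
  have h2 : Real.log 2 ≠ 0 := ne_of_gt hlog2
  have hE : Real.negMulLog θs + Real.negMulLog (1 - θs) + (1 - θs) * Real.log ((B:ℝ) - 1)
      = ∑ b, Real.negMulLog (p b) := by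
    have h := hkey
    simp only [Real.logb] at h
    have hsumr : ∑ b, -(p b * (Real.log (p b) / Real.log 2))
        = (∑ b, Real.negMulLog (p b)) / Real.log 2 := by
      rw [Finset.sum_div]
      exact Finset.sum_congr rfl (fun b _ => by rw [Real.negMulLog]; ring)
    rw [hsumr] at h
    have h3 : (Real.negMulLog θs + Real.negMulLog (1 - θs)
        + (1 - θs) * Real.log ((B:ℝ) - 1)) / Real.log 2
        = (∑ b, Real.negMulLog (p b)) / Real.log 2 := by
      rw [← h]
      simp only [Real.negMulLog]
      ring
    have h4 := congrArg (· * Real.log 2) h3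
    simpa [div_mul_cancel₀, h2] using h4
  -- Fano-type bound : ∑ negMulLog (p b) ≤ negMulLog θ + negMulLog (1-θ) + (1-θ) log (B-1)
  have hFano : ∑ b, Real.negMulLog (p b)
      ≤ Real.negMulLog θ + Real.negMulLog (1 - θ) + (1 - θ) * Real.log ((B:ℝ) - 1) := by
    have hsplit : ∑ b, Real.negMulLog (p b)
        = Real.negMulLog θ + ∑ b ∈ Finset.univ.erase b₀, Real.negMulLog (p b) := by
      rw [← Finset.add_sum_erase _ _ (Finset.mem_univ b₀), hpb₀]
    have hcard : ((Finset.univ.erase b₀ : Finset (Fin B)).card : ℝ) = (B:ℝ) - 1 := by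
      rw [Finset.card_erase_of_mem (Finset.mem_univ b₀)]
      simp only [Finset.card_univ, Fintype.card_fin]
      push_cast [Nat.cast_sub (by omega : 1 ≤ B)]
      ring
    have hrest : ∑ b ∈ Finset.univ.erase b₀, p b = 1 - θ := by
      have := Finset.add_sum_erase _ p (Finset.mem_univ b₀)
      rw [hsum] at this  -- careful direction
      rw [← hpb₀]
      linarith [this]
    have hne' : (Finset.univ.erase b₀ : Finset (Fin B)).Nonempty := by
      rw [← Finset.card_pos]
      have : (Finset.univ.erase b₀ : Finset (Fin B)).card = B - 1 := by
        rw [Finset.card_erase_of_mem (Finset.mem_univ b₀)]; simp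
      omega
    have := aux_sum_negMulLog_le (Finset.univ.erase b₀) hne' p (fun i _ => hp i)
    rw [hrest, hcard] at this
    rw [hsplit]
    linarith [this]
  -- qaryEntropy form
  have hq : ∀ t : ℝ, Real.negMulLog t + Real.negMulLog (1 - t) + (1 - t) * Real.log ((B:ℝ) - 1)
      = Real.qaryEntropy B (1 - t) := by
    intro t
    rw [Real.qaryEntropy, Real.binEntropy_eq_negMulLog_add_negMulLog_one_sub]
    have : (((B:ℤ) - 1 : ℤ) : ℝ) = (B:ℝ) - 1 := by push_cast; ring
    rw [this]
    ring_nf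
  -- conclude θ ≤ θs
  have hmono := Real.qaryEntropy_strictMonoOn (q := B) hB
  have hθle : θ ≤ θs := by
    by_contra hcon
    push_neg at hcon
    have h1 : (1 - θ) ∈ Set.Icc (0:ℝ) (1 - 1/(B:ℝ)) := ⟨by linarith, by linarith⟩
    have h2 : (1 - θs) ∈ Set.Icc (0:ℝ) (1 - 1/(B:ℝ)) := ⟨by linarith [hθ.2], by linarith [hθ.1]⟩
    have hlt := hmono h1 h2 (by linarith)
    rw [← hq θ, ← hq θs] at hlt
    have : ∑ b, Real.negMulLog (p b) < ∑ b, Real.negMulLog (p b) := by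
      calc ∑ b, Real.negMulLog (p b) ≤ _ := hFano
        _ < _ := hlt
        _ = _ := hE
    exact lt_irrefl _ this
  -- finish
  have hfin : Real.logb 2 θ ≤ Real.logb 2 θs := Real.logb_le_logb_of_le one_lt_two hθpos hθle
  linarith [hfin]
end

section
/- In particular, for α > 1: H^(α)(P) ≤ (α²/(α²-1))·H^(α+1)(P). -/
/-!
Multiplying out the prefactors, the inequality says `α · log ∑ p^(α+1) ≤ (α+1) · log ∑ p^α`,
i.e. `‖p‖_(α+1) ≤ ‖p‖_α`: the `ℓ^r` norms decrease in `r`. This is superadditivity of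
`y ↦ y^s` for `s = (α+1)/α ≥ 1`, applied to `y = p^α`.
-/

open Real Finset

namespace Real

lemma sum_rpow_le_rpow_sum {ι : Type*} (s : Finset ι) {f : ι → ℝ} (hf : ∀ i ∈ s, 0 ≤ f i)
    {p : ℝ} (hp : 1 ≤ p) : ∑ i ∈ s, f i ^ p ≤ (∑ i ∈ s, f i) ^ p := by
  classical
  induction s using Finset.induction_on with
  | empty => simp [zero_rpow (by linarith : p ≠ 0)]
  | insert a s ha ih =>
    rw [sum_insert ha, sum_insert ha]
    have hfa : 0 ≤ f a := hf a (mem_insert_self a s)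
    have hfs : ∀ i ∈ s, 0 ≤ f i := fun i hi => hf i (mem_insert_of_mem hi)
    calc f a ^ p + ∑ i ∈ s, f i ^ p ≤ f a ^ p + (∑ i ∈ s, f i) ^ p := by gcongr; exact ih hfs
      _ ≤ (f a + ∑ i ∈ s, f i) ^ p := add_rpow_le_rpow_add hfa (sum_nonneg hfs) hp

lemma sum_rpow_le_rpow_sum_rpow {ι : Type*} (s : Finset ι) {x : ι → ℝ} (hx : ∀ i ∈ s, 0 ≤ x i)
    {r q : ℝ} (hr : 0 < r) (hrq : r ≤ q) :
    ∑ i ∈ s, x i ^ q ≤ (∑ i ∈ s, x i ^ r) ^ (q / r) := by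
  calc ∑ i ∈ s, x i ^ q = ∑ i ∈ s, (x i ^ r) ^ (q / r) := by
        refine sum_congr rfl fun i hi => ?_
        rw [← rpow_mul (hx i hi), mul_div_cancel₀ q hr.ne']
    _ ≤ (∑ i ∈ s, x i ^ r) ^ (q / r) :=
        sum_rpow_le_rpow_sum s (fun i hi => rpow_nonneg (hx i hi) r) ((one_le_div hr).2 hrq)

lemma mul_logb_sum_rpow_le {ι : Type*} (s : Finset ι) {x : ι → ℝ} (hx : ∀ i ∈ s, 0 ≤ x i)
    {b r q : ℝ} (hb : 1 < b) (hr : 0 < r) (hrq : r ≤ q) :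
    r * logb b (∑ i ∈ s, x i ^ q) ≤ q * logb b (∑ i ∈ s, x i ^ r) := by
  by_cases hpos : ∃ i ∈ s, 0 < x i
  · obtain ⟨i, hi, hxi⟩ := hpos
    have sum_rpow_pos (t : ℝ) : 0 < ∑ i ∈ s, x i ^ t :=
      sum_pos' (fun j hj => rpow_nonneg (hx j hj) t) ⟨i, hi, rpow_pos_of_pos hxi t⟩
    calc r * logb b (∑ i ∈ s, x i ^ q)
        ≤ r * logb b ((∑ i ∈ s, x i ^ r) ^ (q / r)) := by
          gcongr
          exacts [sum_rpow_pos q, sum_rpow_le_rpow_sum_rpow s hx hr hrq]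
      _ = q * logb b (∑ i ∈ s, x i ^ r) := by
          rw [logb_rpow_eq_mul_logb_of_pos (sum_rpow_pos r)]
          field_simp
  · push Not at hpos
    have sum_rpow_eq_zero {t : ℝ} (ht : t ≠ 0) : ∑ i ∈ s, x i ^ t = 0 :=
      sum_eq_zero fun i hi => by rw [le_antisymm (hpos i hi) (hx i hi), zero_rpow ht]
    simp [sum_rpow_eq_zero hr.ne', sum_rpow_eq_zero (hr.trans_le hrq).ne']

end Real

theorem renyi_entropy_successive_order_general {B : ℕ} (p : Fin B → ℝ)
    (hp : ∀ b, 0 ≤ p b)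
    (α : ℝ) (hα : 1 < α) :
    (1 / (1 - α)) * Real.logb 2 (∑ b, p b ^ α) ≤
      (α ^ 2 / (α ^ 2 - 1)) * ((1 / (1 - (α + 1))) * Real.logb 2 (∑ b, p b ^ (α + 1))) := by
  have hα0 : 0 < α := by linarith
  have hα2 : 0 < α ^ 2 - 1 := by nlinarith
  have key := mul_logb_sum_rpow_le univ (fun b _ => hp b) one_lt_two hα0
    (le_add_of_nonneg_right zero_le_one)
  calc (1 / (1 - α)) * logb 2 (∑ b, p b ^ α)
      = -((α + 1) * logb 2 (∑ b, p b ^ α)) / (α ^ 2 - 1) := by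
        field_simp [hα2.ne', sub_ne_zero.2 hα.ne]
        ring
    _ ≤ -(α * logb 2 (∑ b, p b ^ (α + 1))) / (α ^ 2 - 1) := by gcongr
    _ = _ := by
        rw [show (1 : ℝ) - (α + 1) = -α by ring]
        field_simp [hα2.ne']

/-- For α > 1: H^(α)(P) ≤ (α²/(α²-1))·H^(α+1)(P). -/
theorem renyi_entropy_successive_order {B : ℕ} (p : Fin B → ℝ)
    (hp : ∀ b, 0 ≤ p b) (hsum : ∑ b, p b = 1)
    (α : ℝ) (hα : 1 < α) :
    (1 / (1 - α)) * Real.logb 2 (∑ b, p b ^ α) ≤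
      (α ^ 2 / (α ^ 2 - 1)) * ((1 / (1 - (α + 1))) * Real.logb 2 (∑ b, p b ^ (α + 1))) :=
  renyi_entropy_successive_order_general p hp α hα
end

section
/- Slope comparison for the variance analysis: let z(θ, α) = 1/(α·(θ^(α-1) - ((1-θ)/(B-1))^(α-1))) for θ ∈ (1/B, 1]. Then z(θ, 2) < z(θ, 3) if and only if 1/B < θ < 2/3 - 1/(3(B-2)), for B > 3. -/
open Real

/-- Slope comparison: z(θ,2) < z(θ,3) iff 1/B < θ < 2/3 - 1/(3(B-2)), for B > 3. -/
theorem slope_comparison {B : ℕ} (hB : 3 < B) (θ : ℝ)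
    (hθ : θ ∈ Set.Ioc (1 / (B : ℝ)) 1) :
    1 / (2 * (θ - (1 - θ) / ((B : ℝ) - 1))) <
        1 / (3 * (θ ^ 2 - ((1 - θ) / ((B : ℝ) - 1)) ^ 2)) ↔
      (1 / (B : ℝ) < θ ∧ θ < 2 / 3 - 1 / (3 * ((B : ℝ) - 2))) := by
  obtain ⟨h1, h2⟩ := hθ
  have hBR : (3 : ℝ) < B := by exact_mod_cast hB
  have hB1 : (0 : ℝ) < (B : ℝ) - 1 := by linarith
  have hB2 : (0 : ℝ) < (B : ℝ) - 2 := by linarith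
  have hB0 : (0 : ℝ) < B := by linarith
  set u : ℝ := (1 - θ) / ((B : ℝ) - 1) with hu
  have hθ0 : 0 < θ := lt_trans (by positivity) h1
  have hu0 : 0 ≤ u := div_nonneg (by linarith) (by linarith)
  have hθB : 1 < θ * B := by
    rw [div_lt_iff₀ hB0] at h1; linarith
  have huθ : u < θ := by
    rw [hu, div_lt_iff₀ hB1]; nlinarith
  have hd1 : 0 < 2 * (θ - u) := by linarith
  have hd2 : 0 < 3 * (θ ^ 2 - u ^ 2) := by nlinarith
  rw [div_lt_div_iff₀ hd1 hd2]
  have hu' : u * ((B : ℝ) - 1) = 1 - θ := by rw [hu]; field_simp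
  have hiff1 : 1 * (3 * (θ ^ 2 - u ^ 2)) < 1 * (2 * (θ - u)) ↔ 3 * (θ + u) < 2 := by
    constructor <;> intro h <;> nlinarith [mul_pos (sub_pos.mpr huθ) (sub_pos.mpr huθ)]
  have hiff2 : 3 * (θ + u) < 2 ↔ θ < 2 / 3 - 1 / (3 * ((B : ℝ) - 2)) := by
    rw [show (2 / 3 - 1 / (3 * ((B : ℝ) - 2))) = (2 * (B : ℝ) - 5) / (3 * ((B : ℝ) - 2)) by
      field_simp; ring, lt_div_iff₀ (by linarith : (0 : ℝ) < 3 * ((B : ℝ) - 2))]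
    constructor <;> intro h <;> nlinarith
  rw [hiff1, hiff2]
  exact ⟨fun h => ⟨h1, h⟩, fun h => h.2⟩
end
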